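/- For any real-valued smooth function φ with compact support in ℝ², the Ladyzhenskaya inequality holds: ‖φ‖⁴_{L⁴} ≤ 2 ‖φ‖²_{L²} ‖∇φ‖²_{L²}. -/

import Mathlib

open MeasureTheory Set ENNReal

noncomputable section Ladyzhenskaya

/-- The canonical linear homeomorphism `ℝ × ℝ ≃ EuclideanSpace ℝ (Fin 2)`. -/
def Lmap : (ℝ × ℝ) ≃L[ℝ] EuclideanSpace ℝ (Fin 2) :=
  (ContinuousLinearEquiv.finTwoArrow ℝ ℝ).symm.trans
    (EuclideanSpace.equiv (Fin 2) ℝ).symm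

lemma Lmap_mp : MeasurePreserving (⇑Lmap) volume volume := by
  have h1 := (volume_preserving_finTwoArrow ℝ).symm _
  have h2 := (EuclideanSpace.volume_preserving_symm_measurableEquiv_toLp (Fin 2)).symm
  have he : ⇑Lmap = (⇑(MeasurableEquiv.toLp 2 (Fin 2 → ℝ)).symm.symm) ∘
      (⇑(MeasurableEquiv.finTwoArrow (α := ℝ)).symm) := by
    funext p; rfl
  rw [he]
  exact h2.comp h1

lemma Lmap_single0 : Lmap (1, 0) = EuclideanSpace.single (0 : Fin 2) (1 : ℝ) := by
  ext i
  fin_cases i <;> simp [Lmap, EuclideanSpace.single_apply]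

lemma Lmap_single1 : Lmap (0, 1) = EuclideanSpace.single (1 : Fin 2) (1 : ℝ) := by
  ext i
  fin_cases i <;> simp [Lmap, EuclideanSpace.single_apply]

lemma fderiv_norm_sq' (f : EuclideanSpace ℝ (Fin 2) →L[ℝ] ℝ) :
    f (EuclideanSpace.single 0 1) ^ 2 + f (EuclideanSpace.single 1 1) ^ 2 = ‖f‖ ^ 2 := by
  set v := (InnerProductSpace.toDual ℝ (EuclideanSpace ℝ (Fin 2))).symm f with hv
  have hfw : ∀ w, f w = inner ℝ v w := fun w =>
    (InnerProductSpace.toDual_symm_apply (𝕜 := ℝ)).symm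
  have hnorm : ‖v‖ = ‖f‖ := LinearIsometryEquiv.norm_map _ f
  have h0 : f (EuclideanSpace.single (0 : Fin 2) (1 : ℝ)) = v 0 := by
    rw [hfw]; simp [EuclideanSpace.inner_single_right]
  have h1 : f (EuclideanSpace.single (1 : Fin 2) (1 : ℝ)) = v 1 := by
    rw [hfw]; simp [EuclideanSpace.inner_single_right]
  have hn : ‖v‖ ^ 2 = v 0 ^ 2 + v 1 ^ 2 := by
    rw [EuclideanSpace.norm_eq, Real.sq_sqrt (by positivity)]
    simp [Fin.sum_univ_two, Real.norm_eq_abs, sq_abs]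
  rw [h0, h1, ← hnorm, hn]

lemma one_dim (g : ℝ → ℝ) (hg : ContDiff ℝ 1 g) (hgc : HasCompactSupport g) (x : ℝ) :
    ENNReal.ofReal (g x ^ 2) ≤ ∫⁻ s, ENNReal.ofReal (2 * |g s| * |deriv g s|) := by
  have hg2 : ContDiff ℝ 1 (fun s => g s ^ 2) := hg.pow 2
  have hg2c : HasCompactSupport (fun s => g s ^ 2) := by
    have : (fun s => g s ^ 2) = (g * g) := by ext s; simp [sq]
    rw [this]; exact hgc.mul_right
  have key := HasCompactSupport.enorm_le_lintegral_Ici_deriv hg2 hg2c x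
  have hd : ∀ s, deriv (fun t => g t ^ 2) s = 2 * g s * deriv g s := fun s => by
    have h := ((hg.differentiable one_ne_zero s).hasDerivAt.pow 2).deriv
    exact h.trans (by norm_num)
  calc ENNReal.ofReal (g x ^ 2) = (‖g x ^ 2‖ₑ : ℝ≥0∞) :=
        (Real.enorm_eq_ofReal (by positivity)).symm
    _ ≤ ∫⁻ s in Iic x, (‖deriv (fun t => g t ^ 2) s‖ₑ : ℝ≥0∞) := key
    _ ≤ ∫⁻ s, (‖deriv (fun t => g t ^ 2) s‖ₑ : ℝ≥0∞) := setLIntegral_le_lintegral _ _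
    _ = ∫⁻ s, ENNReal.ofReal (2 * |g s| * |deriv g s|) := by
        refine lintegral_congr fun s => ?_
        rw [hd s, ← Real.enorm_eq_ofReal (by positivity)]
        rw [Real.enorm_eq_ofReal_abs, Real.enorm_eq_ofReal_abs]
        congr 1
        simp [abs_mul]

lemma amgm2 (a b : ℝ≥0∞) : 2 * (a ^ (1/2 : ℝ) * b ^ (1/2 : ℝ)) ≤ a + b := by
  rcases eq_or_ne a ⊤ with ha | ha
  · rcases eq_or_ne b 0 with hb | hb
    · simp [ha, hb]
    · simp [ha, hb]
  rcases eq_or_ne b ⊤ with hb | hb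
  · simp [hb]
  lift a to NNReal using ha
  lift b to NNReal using hb
  rw [← ENNReal.coe_rpow_of_nonneg _ (by norm_num), ← ENNReal.coe_rpow_of_nonneg _ (by norm_num),
    ← ENNReal.coe_mul, ← ENNReal.coe_add, ← ENNReal.coe_ofNat, ← ENNReal.coe_mul,
    ENNReal.coe_le_coe]
  have h := NNReal.geom_mean_le_arith_mean2_weighted (1/2) (1/2) a b (by
    rw [← NNReal.coe_inj]; push_cast; norm_num)
  calc 2 * (a ^ (1/2 : ℝ) * b ^ (1/2 : ℝ)) ≤ 2 * ((1/2) * a + (1/2) * b) := by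
        exact mul_le_mul_right (by simpa using h) 2
    _ = a + b := by
        rw [← NNReal.coe_inj]; push_cast; ring

lemma eLpNorm_two_sq {X : Type*} [MeasurableSpace X] (μ : Measure X) (f : X → ℝ) :
    (eLpNorm f 2 μ) ^ 2 = ∫⁻ x, ENNReal.ofReal (f x ^ 2) ∂μ := by
  rw [eLpNorm_eq_lintegral_rpow_enorm_toReal (by norm_num) (by norm_num)]
  rw [← ENNReal.rpow_natCast _ 2, ← ENNReal.rpow_mul]
  norm_num
  refine lintegral_congr fun x => ?_
  rw [Real.enorm_eq_ofReal_abs, ← ENNReal.ofReal_pow (abs_nonneg _)]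
  norm_num [sq_abs]

lemma eLpNorm_four_pow {X : Type*} [MeasurableSpace X] (μ : Measure X) (f : X → ℝ) :
    (eLpNorm f 4 μ) ^ 4 = ∫⁻ x, ENNReal.ofReal (f x ^ 4) ∂μ := by
  rw [eLpNorm_eq_lintegral_rpow_enorm_toReal (by norm_num) (by norm_num)]
  rw [← ENNReal.rpow_natCast _ 4, ← ENNReal.rpow_mul]
  norm_num
  refine lintegral_congr fun x => ?_
  rw [Real.enorm_eq_ofReal_abs, ← ENNReal.ofReal_pow (abs_nonneg _)]
  rw [pow_abs, abs_of_nonneg (by positivity : (0:ℝ) ≤ f x ^ 4)]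

end Ladyzhenskaya

/-- Ladyzhenskaya inequality in ℝ²: ‖φ‖⁴_{L⁴} ≤ 2 ‖φ‖²_{L²} ‖∇φ‖²_{L²} for smooth
compactly supported φ. -/
theorem stmt_1 (φ : EuclideanSpace ℝ (Fin 2) → ℝ)
    (hφ : ContDiff ℝ (⊤ : ℕ∞) φ) (hφc : HasCompactSupport φ) :
    (eLpNorm φ 4 volume) ^ 4 ≤
      2 * (eLpNorm φ 2 volume) ^ 2 * (eLpNorm (fun x => ‖fderiv ℝ φ x‖) 2 volume) ^ 2 := by
  classical
  -- move to `ℝ × ℝ`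
  have hψ : ContDiff ℝ (⊤ : ℕ∞) (φ ∘ ⇑Lmap) := hφ.comp Lmap.contDiff
  have hψc : HasCompactSupport (φ ∘ ⇑Lmap) := hφc.comp_homeomorph Lmap.toHomeomorph
  set ψ : ℝ × ℝ → ℝ := φ ∘ ⇑Lmap with hψdef
  set d1 : ℝ × ℝ → ℝ := fun p => fderiv ℝ ψ p (1, 0) with hd1def
  set d2 : ℝ × ℝ → ℝ := fun p => fderiv ℝ ψ p (0, 1) with hd2def
  have hψcont : Continuous ψ := hψ.continuous
  have hfd : Continuous (fderiv ℝ ψ) := hψ.continuous_fderiv (by simp)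
  have hd1c : Continuous d1 := hfd.clm_apply continuous_const
  have hd2c : Continuous d2 := hfd.clm_apply continuous_const
  -- slice derivatives
  have hslice1 : ∀ y x, HasDerivAt (fun t => ψ (t, y)) (d1 (x, y)) x := by
    intro y x
    have h := ((hψ.differentiable (by simp) (x, y)).hasFDerivAt).comp_hasDerivAt x
      ((hasDerivAt_id x).prodMk (hasDerivAt_const x y))
    exact h
  have hslice2 : ∀ x y, HasDerivAt (fun t => ψ (x, t)) (d2 (x, y)) y := by
    intro x y
    have h := ((hψ.differentiable (by simp) (x, y)).hasFDerivAt).comp_hasDerivAt y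
      ((hasDerivAt_const y x).prodMk (hasDerivAt_id y))
    exact h
  -- slice regularity
  have hsl1cd : ∀ y, ContDiff ℝ 1 (fun t => ψ (t, y)) := fun y =>
    (hψ.of_le (by simp)).comp (contDiff_id.prodMk contDiff_const)
  have hsl2cd : ∀ x, ContDiff ℝ 1 (fun t => ψ (x, t)) := fun x =>
    (hψ.of_le (by simp)).comp (contDiff_const.prodMk contDiff_id)
  have hsl1cs : ∀ y, HasCompactSupport (fun t => ψ (t, y)) := by
    intro y
    apply HasCompactSupport.intro (hψc.image continuous_fst)
    intro x hx
    by_contra h'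
    exact hx ⟨(x, y), subset_tsupport _ h', rfl⟩
  have hsl2cs : ∀ x, HasCompactSupport (fun t => ψ (x, t)) := by
    intro x
    apply HasCompactSupport.intro (hψc.image continuous_snd)
    intro y hy
    by_contra h'
    exact hy ⟨(x, y), subset_tsupport _ h', rfl⟩
  -- the two pointwise slice bounds
  have key1 : ∀ x y, ENNReal.ofReal (ψ (x, y) ^ 2) ≤
      ∫⁻ s, ENNReal.ofReal (2 * |ψ (s, y)| * |d1 (s, y)|) := by
    intro x y
    have h := one_dim (fun t => ψ (t, y)) (hsl1cd y) (hsl1cs y) x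
    have hder : ∀ s, deriv (fun t => ψ (t, y)) s = d1 (s, y) := fun s => (hslice1 y s).deriv
    simpa [hder] using h
  have key2 : ∀ x y, ENNReal.ofReal (ψ (x, y) ^ 2) ≤
      ∫⁻ t, ENNReal.ofReal (2 * |ψ (x, t)| * |d2 (x, t)|) := by
    intro x y
    have h := one_dim (fun t => ψ (x, t)) (hsl2cd x) (hsl2cs x) y
    have hder : ∀ t, deriv (fun s => ψ (x, s)) t = d2 (x, t) := fun t => (hslice2 x t).deriv
    simpa [hder] using h
  -- names for the integrands
  set h1 : ℝ × ℝ → ℝ≥0∞ := fun p => ENNReal.ofReal (2 * |ψ p| * |d1 p|) with hh1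
  set h2 : ℝ × ℝ → ℝ≥0∞ := fun p => ENNReal.ofReal (2 * |ψ p| * |d2 p|) with hh2
  have h1m : Measurable h1 :=
    (ENNReal.continuous_ofReal.comp ((continuous_const.mul hψcont.abs).mul hd1c.abs)).measurable
  have h2m : Measurable h2 :=
    (ENNReal.continuous_ofReal.comp ((continuous_const.mul hψcont.abs).mul hd2c.abs)).measurable
  set A : ℝ → ℝ≥0∞ := fun y => ∫⁻ s, h1 (s, y) with hA
  set B : ℝ → ℝ≥0∞ := fun x => ∫⁻ t, h2 (x, t) with hB
  have hAm : Measurable A := h1m.lintegral_prod_left'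
  have hBm : Measurable B := h2m.lintegral_prod_right'
  have key : ∀ p : ℝ × ℝ, ENNReal.ofReal (ψ p ^ 4) ≤ A p.2 * B p.1 := by
    rintro ⟨x, y⟩
    have e : ENNReal.ofReal (ψ (x, y) ^ 4) =
        ENNReal.ofReal (ψ (x, y) ^ 2) * ENNReal.ofReal (ψ (x, y) ^ 2) := by
      rw [← ENNReal.ofReal_mul (by positivity)]
      ring_nf
    rw [e]
    exact mul_le_mul' (key1 x y) (key2 x y)
  -- Tonelli manipulations
  have main : (∫⁻ p, ENNReal.ofReal (ψ p ^ 4)) ≤ (∫⁻ p, h1 p) * (∫⁻ p, h2 p) := by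
    have step1 : (∫⁻ p, ENNReal.ofReal (ψ p ^ 4)) ≤ ∫⁻ p : ℝ × ℝ, A p.2 * B p.1 :=
      lintegral_mono key
    have step2 : (∫⁻ p : ℝ × ℝ, A p.2 * B p.1) = (∫⁻ y, A y) * (∫⁻ x, B x) := by
      rw [Measure.volume_eq_prod]
      have hm : Measurable (fun p : ℝ × ℝ => A p.2 * B p.1) :=
        (hAm.comp measurable_snd).mul (hBm.comp measurable_fst)
      rw [lintegral_prod (fun p : ℝ × ℝ => A p.2 * B p.1) hm.aemeasurable]
      calc (∫⁻ x, ∫⁻ y, A y * B x) = ∫⁻ x, (∫⁻ y, A y) * B x := by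
            refine lintegral_congr fun x => lintegral_mul_const _ hAm
        _ = (∫⁻ y, A y) * (∫⁻ x, B x) := lintegral_const_mul _ hBm
    have hAint : (∫⁻ y, A y) = ∫⁻ p, h1 p := by
      rw [Measure.volume_eq_prod]
      exact (lintegral_prod_symm h1 h1m.aemeasurable).symm
    have hBint : (∫⁻ x, B x) = ∫⁻ p, h2 p := by
      rw [Measure.volume_eq_prod]
      exact (lintegral_prod h2 h2m.aemeasurable).symm
    calc (∫⁻ p, ENNReal.ofReal (ψ p ^ 4)) ≤ (∫⁻ y, A y) * (∫⁻ x, B x) := step1.trans step2.le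
      _ = (∫⁻ p, h1 p) * (∫⁻ p, h2 p) := by rw [hAint, hBint]
  -- Hölder on each factor
  set S : ℝ≥0∞ := ∫⁻ p, ENNReal.ofReal (ψ p ^ 2) with hS
  set P1 : ℝ≥0∞ := ∫⁻ p, ENNReal.ofReal (d1 p ^ 2) with hP1
  set P2 : ℝ≥0∞ := ∫⁻ p, ENNReal.ofReal (d2 p ^ 2) with hP2
  have sq_rpow : ∀ r : ℝ, (ENNReal.ofReal |r|) ^ (2:ℝ) = ENNReal.ofReal (r ^ 2) := by
    intro r
    rw [ENNReal.ofReal_rpow_of_nonneg (abs_nonneg r) (by norm_num)]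
    rw [show |r| ^ (2:ℝ) = r ^ 2 by
      rw [show (2:ℝ) = ((2:ℕ):ℝ) by norm_num, Real.rpow_natCast, sq_abs]]
  have holder : ∀ (d : ℝ × ℝ → ℝ), Continuous d →
      (∫⁻ p, ENNReal.ofReal (2 * |ψ p| * |d p|)) ≤
        2 * S ^ (1/2:ℝ) * (∫⁻ p, ENNReal.ofReal (d p ^ 2)) ^ (1/2:ℝ) := by
    intro d hdc
    have hfm : Measurable (fun p : ℝ × ℝ => ENNReal.ofReal |ψ p|) :=
      (ENNReal.continuous_ofReal.comp hψcont.abs).measurable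
    have hgm : Measurable (fun p : ℝ × ℝ => ENNReal.ofReal |d p|) :=
      (ENNReal.continuous_ofReal.comp hdc.abs).measurable
    have H := ENNReal.lintegral_mul_le_Lp_mul_Lq (volume : Measure (ℝ × ℝ))
      (p := 2) (q := 2) (Real.holderConjugate_iff.mpr ⟨one_lt_two, by norm_num⟩) hfm.aemeasurable hgm.aemeasurable
    have e1 : (fun p : ℝ × ℝ => ENNReal.ofReal (2 * |ψ p| * |d p|)) =
        fun p => 2 * (ENNReal.ofReal |ψ p| * ENNReal.ofReal |d p|) := by
      funext p
      rw [ENNReal.ofReal_mul (by positivity), ENNReal.ofReal_mul (by norm_num)]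
      norm_num [mul_assoc]
    calc (∫⁻ p, ENNReal.ofReal (2 * |ψ p| * |d p|))
        = ∫⁻ p, 2 * (ENNReal.ofReal |ψ p| * ENNReal.ofReal |d p|) := by rw [e1]
      _ = 2 * ∫⁻ p, ENNReal.ofReal |ψ p| * ENNReal.ofReal |d p| :=
          lintegral_const_mul 2 (hfm.mul hgm)
      _ ≤ 2 * ((∫⁻ p, ENNReal.ofReal |ψ p| ^ (2:ℝ)) ^ (1/2:ℝ) *
            (∫⁻ p, ENNReal.ofReal |d p| ^ (2:ℝ)) ^ (1/2:ℝ)) :=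
          mul_le_mul_right (by simpa using H) 2
      _ = 2 * S ^ (1/2:ℝ) * (∫⁻ p, ENNReal.ofReal (d p ^ 2)) ^ (1/2:ℝ) := by
          simp_rw [sq_rpow]
          rw [hS, mul_assoc]
  have hold1 : (∫⁻ p, h1 p) ≤ 2 * S ^ (1/2:ℝ) * P1 ^ (1/2:ℝ) := by
    have h := holder d1 hd1c
    rw [← hP1] at h
    exact h
  have hold2 : (∫⁻ p, h2 p) ≤ 2 * S ^ (1/2:ℝ) * P2 ^ (1/2:ℝ) := by
    have h := holder d2 hd2c
    rw [← hP2] at h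
    exact h
  have hSS : S ^ (1/2:ℝ) * S ^ (1/2:ℝ) = S := by
    rw [← ENNReal.rpow_add_of_nonneg _ _ (by norm_num) (by norm_num)]
    norm_num
  have final : (∫⁻ p, ENNReal.ofReal (ψ p ^ 4)) ≤ 2 * S * (P1 + P2) := by
    calc (∫⁻ p, ENNReal.ofReal (ψ p ^ 4)) ≤ (∫⁻ p, h1 p) * (∫⁻ p, h2 p) := main
      _ ≤ (2 * S ^ (1/2:ℝ) * P1 ^ (1/2:ℝ)) * (2 * S ^ (1/2:ℝ) * P2 ^ (1/2:ℝ)) :=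
          mul_le_mul' hold1 hold2
      _ = (2 * S) * (2 * (P1 ^ (1/2:ℝ) * P2 ^ (1/2:ℝ))) := by
          rw [show (2 * S ^ (1/2:ℝ) * P1 ^ (1/2:ℝ)) * (2 * S ^ (1/2:ℝ) * P2 ^ (1/2:ℝ))
              = (2 * 2) * (S ^ (1/2:ℝ) * S ^ (1/2:ℝ)) * (P1 ^ (1/2:ℝ) * P2 ^ (1/2:ℝ)) by ring,
            hSS]
          ring
      _ ≤ (2 * S) * (P1 + P2) := mul_le_mul_right (amgm2 P1 P2) _
  -- identify the gradient term
  have hgrad : P1 + P2 = ∫⁻ p : ℝ × ℝ, ENNReal.ofReal (‖fderiv ℝ φ (Lmap p)‖ ^ 2) := by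
    have hm1 : Measurable fun p : ℝ × ℝ => ENNReal.ofReal (d1 p ^ 2) :=
      (ENNReal.continuous_ofReal.comp (hd1c.pow 2)).measurable
    rw [hP1, hP2, ← lintegral_add_left hm1]
    refine lintegral_congr fun p => ?_
    rw [← ENNReal.ofReal_add (by positivity) (by positivity)]
    congr 1
    have hcomp := Lmap.comp_right_fderiv (f := φ) (x := p)
    have e1 : d1 p = fderiv ℝ φ (Lmap p) (EuclideanSpace.single 0 1) := by
      show fderiv ℝ ψ p (1, 0) = _
      rw [hψdef, hcomp]
      simp only [ContinuousLinearMap.coe_comp', Function.comp_apply,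
        ContinuousLinearEquiv.coe_coe]
      rw [Lmap_single0]
    have e2 : d2 p = fderiv ℝ φ (Lmap p) (EuclideanSpace.single 1 1) := by
      show fderiv ℝ ψ p (0, 1) = _
      rw [hψdef, hcomp]
      simp only [ContinuousLinearMap.coe_comp', Function.comp_apply,
        ContinuousLinearEquiv.coe_coe]
      rw [Lmap_single1]
    rw [e1, e2, fderiv_norm_sq']
  -- transfer integrals back to `EuclideanSpace`
  have tX : (∫⁻ p, ENNReal.ofReal (ψ p ^ 4)) = ∫⁻ u, ENNReal.ofReal (φ u ^ 4) :=
    Lmap_mp.lintegral_comp ((ENNReal.continuous_ofReal.comp (hφ.continuous.pow 4)).measurable)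
  have tS : S = ∫⁻ u, ENNReal.ofReal (φ u ^ 2) := by
    rw [hS]
    exact Lmap_mp.lintegral_comp
      ((ENNReal.continuous_ofReal.comp (hφ.continuous.pow 2)).measurable)
  have tZ : (∫⁻ p : ℝ × ℝ, ENNReal.ofReal (‖fderiv ℝ φ (Lmap p)‖ ^ 2))
      = ∫⁻ u, ENNReal.ofReal (‖fderiv ℝ φ u‖ ^ 2) :=
    Lmap_mp.lintegral_comp
      ((ENNReal.continuous_ofReal.comp (((hφ.continuous_fderiv (by simp)).norm).pow 2)).measurable)
  calc (eLpNorm φ 4 volume) ^ 4 = ∫⁻ u, ENNReal.ofReal (φ u ^ 4) := eLpNorm_four_pow _ _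
    _ = ∫⁻ p, ENNReal.ofReal (ψ p ^ 4) := tX.symm
    _ ≤ 2 * S * (P1 + P2) := final
    _ = 2 * S * ∫⁻ p : ℝ × ℝ, ENNReal.ofReal (‖fderiv ℝ φ (Lmap p)‖ ^ 2) := by rw [hgrad]
    _ = 2 * (∫⁻ u, ENNReal.ofReal (φ u ^ 2)) * (∫⁻ u, ENNReal.ofReal (‖fderiv ℝ φ u‖ ^ 2)) := by
        rw [tS, tZ]
    _ = 2 * (eLpNorm φ 2 volume) ^ 2 * (eLpNorm (fun x => ‖fderiv ℝ φ x‖) 2 volume) ^ 2 := by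
        rw [eLpNorm_two_sq volume φ, eLpNorm_two_sq volume (fun x => ‖fderiv ℝ φ x‖)]
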